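/- (Discrete Cauchy-Pompeiu formula) Let B be a bounded subset of Z_h^2 and f: closure(B) → C. Then for every ζ ∈ Z_h^2: χ_B(ζ) f(ζ) = ∫_{∂B} K^h(z,ζ) f(z) dS(z) + ∫_B E^h(ζ−z) ∂_z̄^h f(z) dV^h(z), where K^h is the discrete Bochner-Martinelli kernel. -/

import Mathlib

/-!
Put `ζ = h q` and `z = h p` with `p, q ∈ ℤ²`. The factor `1/h` in `E^h`, the factor `1/h` of the
difference quotients and the weights `h²` cancel, and the outer normal times the boundary density
is `-h²` times the one-sided difference quotients of `χ_B`. The formula thus becomes an identity on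
`ℤ²` for `χ(p) = χ_B(h p)`, `g(p) = f(h p)` and the fundamental solution `E` of `∂̄` on `ℤ²`.

Since `B` is bounded, `χ` has finite support, so summation by parts applies: the adjoint of the
symmetric operator `∂̄` is `-∂̄`. By the discrete product rule for `∂̄ (χ E(q - ·))`, the boundary
term is exactly what is left over, and what remains is `Σ_p χ(p) g(p) ∂̄E(q - p) = χ(q) g(q)`
because `∂̄E = δ₀`. This is checked on the Fourier side: `∂̄` multiplies the character
`e^{i⟨w,p⟩}` by `(i sin w₁ - sin w₂)/2`, which cancels the symbol `2/(i sin w₁ - sin w₂)` in the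
integral defining `E`. That integral converges absolutely since
`|i sin w₁ - sin w₂| ≥ √(|sin w₁| |sin w₂|)` and `1/√|sin|` is integrable.
-/

noncomputable section
open Complex MeasureTheory Set
open scoped ENNReal

/-- The scaled square lattice `Z_h^2 ⊂ ℂ`. -/
def latt (h : ℝ) : Set ℂ := {z | ∃ m n : ℤ, z = h * ((m : ℂ) + (n : ℂ) * Complex.I)}

/-- Characteristic function of `B`. -/
def chi (B : Set ℂ) : ℂ → ℝ := B.indicator fun _ => (1 : ℝ)

/-- Forward difference quotient in direction `1` with step `h`. -/
def dp1 (h : ℝ) (f : ℂ → ℝ) (z : ℂ) : ℝ := (f (z + h) - f z) / h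
/-- Backward difference quotient in direction `1` with step `h`. -/
def dm1 (h : ℝ) (f : ℂ → ℝ) (z : ℂ) : ℝ := (f z - f (z - h)) / h
/-- Forward difference quotient in direction `i` with step `h`. -/
def dp2 (h : ℝ) (f : ℂ → ℝ) (z : ℂ) : ℝ := (f (z + h * Complex.I) - f z) / h
/-- Backward difference quotient in direction `i` with step `h`. -/
def dm2 (h : ℝ) (f : ℂ → ℝ) (z : ℂ) : ℝ := (f z - f (z - h * Complex.I)) / h

/-- `Σ_{i=1,2} (∂_i^{+,h}χ_B)^2 + (∂_i^{-,h}χ_B)^2`. -/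
def Qsum (h : ℝ) (B : Set ℂ) (z : ℂ) : ℝ :=
  (dp1 h (chi B) z) ^ 2 + (dm1 h (chi B) z) ^ 2 + (dp2 h (chi B) z) ^ 2 + (dm2 h (chi B) z) ^ 2

/-- Density of the discrete boundary measure. -/
def sden (h : ℝ) (B : Set ℂ) (z : ℂ) : ℝ := (h ^ 2 / 2) * Real.sqrt (Qsum h B z)

/-- Components of the discrete outer normal vector (extended by zero, since `x/0 = 0`). -/
def n1p (h : ℝ) (B : Set ℂ) (z : ℂ) : ℝ := -2 * dp1 h (chi B) z / Real.sqrt (Qsum h B z)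
def n1m (h : ℝ) (B : Set ℂ) (z : ℂ) : ℝ := -2 * dm1 h (chi B) z / Real.sqrt (Qsum h B z)
def n2p (h : ℝ) (B : Set ℂ) (z : ℂ) : ℝ := -2 * dp2 h (chi B) z / Real.sqrt (Qsum h B z)
def n2m (h : ℝ) (B : Set ℂ) (z : ℂ) : ℝ := -2 * dm2 h (chi B) z / Real.sqrt (Qsum h B z)

/-- Five-point neighbourhood `N(z) = {z, z±h, z±hi}`. -/
def nbhd (h : ℝ) (z : ℂ) : Set ℂ := {z, z + h, z - h, z + h * Complex.I, z - h * Complex.I}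

/-- Discrete boundary of `B ⊆ Z_h^2`. -/
def dBdry (h : ℝ) (B : Set ℂ) : Set ℂ :=
  {z ∈ latt h | (nbhd h z ∩ B).Nonempty ∧ (nbhd h z \ B).Nonempty}

/-- Discrete interior. -/
def dInt (h : ℝ) (B : Set ℂ) : Set ℂ := B \ dBdry h B

/-- Discrete closure. -/
def dCl (h : ℝ) (B : Set ℂ) : Set ℂ := B ∪ dBdry h B

/-- Complex forward/backward/symmetric differences, and the discrete ∂̄ and ∂ operators. -/
def cdp1 (h : ℝ) (f : ℂ → ℂ) (z : ℂ) : ℂ := (f (z + h) - f z) / h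
def cdm1 (h : ℝ) (f : ℂ → ℂ) (z : ℂ) : ℂ := (f z - f (z - h)) / h
def cdp2 (h : ℝ) (f : ℂ → ℂ) (z : ℂ) : ℂ := (f (z + h * Complex.I) - f z) / h
def cdm2 (h : ℝ) (f : ℂ → ℂ) (z : ℂ) : ℂ := (f z - f (z - h * Complex.I)) / h

def dbarC (h : ℝ) (f : ℂ → ℂ) (z : ℂ) : ℂ :=
  (1 / 2) * ((1 / 2) * (cdp1 h f z + cdm1 h f z) + Complex.I * ((1 / 2) * (cdp2 h f z + cdm2 h f z)))

def dzC (h : ℝ) (f : ℂ → ℂ) (z : ℂ) : ℂ :=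
  (1 / 2) * ((1 / 2) * (cdp1 h f z + cdm1 h f z) - Complex.I * ((1 / 2) * (cdp2 h f z + cdm2 h f z)))

/-- Symmetric differences on the integer lattice `ℤ²`. -/
def D1 (f : ℤ × ℤ → ℂ) (p : ℤ × ℤ) : ℂ := (f (p.1 + 1, p.2) - f (p.1 - 1, p.2)) / 2
def D2 (f : ℤ × ℤ → ℂ) (p : ℤ × ℤ) : ℂ := (f (p.1, p.2 + 1) - f (p.1, p.2 - 1)) / 2

def dbarZ (f : ℤ × ℤ → ℂ) (p : ℤ × ℤ) : ℂ := (1 / 2) * (D1 f p + Complex.I * D2 f p)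
def dzZ (f : ℤ × ℤ → ℂ) (p : ℤ × ℤ) : ℂ := (1 / 2) * (D1 f p - Complex.I * D2 f p)

/-- The fundamental solution of the discrete ∂̄-operator on `ℤ²`. -/
def Efun (p : ℤ × ℤ) : ℂ :=
  (1 / (4 * Real.pi ^ 2)) •
    ∫ w in (Set.Icc (-Real.pi) Real.pi ×ˢ Set.Icc (-Real.pi) Real.pi),
      (2 / (Complex.I * Real.sin w.1 - Real.sin w.2)) *
        Complex.exp (Complex.I * (w.1 * p.1 + w.2 * p.2))

/-- The rescaled fundamental solution `E^h(z) = (1/h) E(z/h)` on `Z_h^2`. -/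
def Eh (h : ℝ) (z : ℂ) : ℂ := (1 / h : ℂ) * Efun (round (z.re / h), round (z.im / h))

/-- The discrete delta `δ_0^h` on `Z_h^2`. -/
def deltah (h : ℝ) (z : ℂ) : ℂ := if z = 0 then (1 / h ^ 2 : ℂ) else 0

/-- The discrete Bochner-Martinelli kernel. -/
def Kker (h : ℝ) (B : Set ℂ) (z ζ : ℂ) : ℂ :=
  (-(Eh h ((h : ℂ) - (z - ζ))) / 4) * (n1m h B z : ℂ) +
  (-(Eh h (-(h : ℂ) - (z - ζ))) / 4) * (n1p h B z : ℂ) +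
  Complex.I * (-(Eh h ((h : ℂ) * Complex.I - (z - ζ))) / 4) * (n2m h B z : ℂ) +
  Complex.I * (-(Eh h (-((h : ℂ) * Complex.I) - (z - ζ))) / 4) * (n2p h B z : ℂ)

/-- Convergence of lattice sets `B^h` to a bounded open set `B ⊂ ℂ`. -/
def ConvergesTo (Bh : ℝ → Set ℂ) (B : Set ℂ) : Prop :=
  ∀ ε > 0, ∃ δ > 0, ∀ h : ℝ, 0 < h → h < δ →
    (∀ α ∈ frontier B, ∃ β ∈ dBdry h (Bh h), dist α β < ε) ∧
    (∀ α ∈ dBdry h (Bh h), ∃ β ∈ frontier B, dist α β < ε) ∧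
    (∀ α ∈ closure B, ∃ β ∈ Bh h, dist α β < ε) ∧
    (∀ α ∈ Bh h, ∃ β ∈ closure B, dist α β < ε)

open Function
open scoped Real

namespace DiscreteCauchyPompeiu

lemma inv_sqrt_abs_sin_le {x : ℝ} (hx : 0 < x) (hx' : x ≤ π / 2) :
    (√|Real.sin x|)⁻¹ ≤ √(π / 2) * x ^ (-(1 / 2) : ℝ) := by
  have hsin : 2 / π * x ≤ Real.sin x := Real.mul_le_sin hx.le hx'
  calc (√|Real.sin x|)⁻¹ ≤ (√(2 / π * x))⁻¹ := by
        gcongr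
        exact hsin.trans (le_abs_self _)
    _ = √(π / 2) * x ^ (-(1 / 2) : ℝ) := by
        rw [Real.rpow_neg hx.le, ← Real.sqrt_eq_rpow, Real.sqrt_mul (by positivity),
          mul_inv, ← Real.sqrt_inv, inv_div]

lemma intervalIntegrable_inv_sqrt_abs_sin (a b : ℝ) :
    IntervalIntegrable (fun x => (√|Real.sin x|)⁻¹) volume a b := by
  have hperiodic : Periodic (fun x => (√|Real.sin x|)⁻¹) π := by
    intro x; simp [Real.sin_add_pi]
  have hright : IntervalIntegrable (fun x => (√|Real.sin x|)⁻¹) volume 0 (π / 2) := by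
    have hmaj := (intervalIntegral.intervalIntegrable_rpow' (a := 0) (b := π / 2)
      (r := -(1 / 2)) (by norm_num)).const_mul √(π / 2)
    refine hmaj.mono_fun' (by fun_prop) ?_
    rw [uIoc_of_le (by positivity)]
    filter_upwards [ae_restrict_mem measurableSet_Ioc] with x hx
    rw [Real.norm_of_nonneg (by positivity)]
    exact inv_sqrt_abs_sin_le hx.1 hx.2
  have hleft : IntervalIntegrable (fun x => (√|Real.sin x|)⁻¹) volume (-(π / 2)) 0 := by
    simpa [Real.sin_neg] using (hright.comp_sub_left 0).symm
  refine hperiodic.intervalIntegrable Real.pi_ne_zero (t := -(π / 2)) ?_ a b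
  simpa [show -(π / 2) + π = π / 2 by ring] using hleft.trans hright

def dbarSymbol (w : ℝ × ℝ) : ℂ := I * Real.sin w.1 - Real.sin w.2

def character (p : ℤ × ℤ) (w : ℝ × ℝ) : ℂ := exp (I * (w.1 * p.1 + w.2 * p.2))

lemma Efun_eq (p : ℤ × ℤ) :
    Efun p = (1 / (4 * π ^ 2)) •
      ∫ w in Icc (-π) π ×ˢ Icc (-π) π, 2 / dbarSymbol w * character p w := rfl

lemma ae_sin_ne_zero : ∀ᵐ x : ℝ, Real.sin x ≠ 0 := by
  refine measure_mono_null (fun x hx => ?_) ((countable_range fun n : ℤ => n * π).measure_zero _)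
  simpa [eq_comm] using Real.sin_eq_zero_iff.mp (not_not.mp hx)

lemma ae_sin_fst_ne_zero_and_sin_snd_ne_zero :
    ∀ᵐ w : ℝ × ℝ, Real.sin w.1 ≠ 0 ∧ Real.sin w.2 ≠ 0 := by
  rw [Measure.volume_eq_prod]
  exact (Measure.quasiMeasurePreserving_fst.ae ae_sin_ne_zero).and
    (Measure.quasiMeasurePreserving_snd.ae ae_sin_ne_zero)

lemma norm_character (p : ℤ × ℤ) (w : ℝ × ℝ) : ‖character p w‖ = 1 := by
  rw [character, norm_exp]
  simp

lemma sqrt_abs_sin_mul_le_norm_dbarSymbol (w : ℝ × ℝ) :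
    √|Real.sin w.1| * √|Real.sin w.2| ≤ ‖dbarSymbol w‖ := by
  rw [← Real.sqrt_mul (abs_nonneg _), Complex.norm_def]
  refine Real.sqrt_le_sqrt ?_
  simp only [dbarSymbol, normSq_apply, ofReal_sin, sub_re, mul_re, I_re, sin_ofReal_re, zero_mul,
    I_im, sin_ofReal_im, mul_zero, sub_self, zero_sub, mul_neg, neg_mul, neg_neg, sub_im, mul_im,
    one_mul, zero_add, sub_zero]
  nlinarith [sq_nonneg (|Real.sin w.1| - |Real.sin w.2|), sq_abs (Real.sin w.1),
    sq_abs (Real.sin w.2)]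

lemma integrableOn_efun_integrand (p : ℤ × ℤ) :
    IntegrableOn (fun w => 2 / dbarSymbol w * character p w)
      (Icc (-π) π ×ˢ Icc (-π) π) := by
  have hmaj : IntegrableOn (fun w : ℝ × ℝ => 2 * ((√|Real.sin w.1|)⁻¹ * (√|Real.sin w.2|)⁻¹))
      (Icc (-π) π ×ˢ Icc (-π) π) := by
    have h := intervalIntegrable_inv_sqrt_abs_sin (-π) π
    rw [intervalIntegrable_iff_integrableOn_Icc_of_le (by linarith [Real.pi_pos])] at h
    have := h.mul_prod h
    rw [Measure.prod_restrict, ← Measure.volume_eq_prod] at this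
    exact this.const_mul 2
  refine hmaj.integrable.mono' (by unfold dbarSymbol character; fun_prop) ?_
  filter_upwards [ae_restrict_of_ae ae_sin_fst_ne_zero_and_sin_snd_ne_zero] with w ⟨h1, h2⟩
  rw [norm_mul, norm_character, mul_one, norm_div, ← mul_inv, div_eq_mul_inv, Complex.norm_ofNat]
  gcongr
  exact sqrt_abs_sin_mul_le_norm_dbarSymbol w

lemma integral_exp_I_mul_int (n : ℤ) :
    ∫ t in Icc (-π) π, exp (I * (t * n)) = if n = 0 then (2 * π : ℂ) else 0 := by
  rw [integral_Icc_eq_integral_Ioc, ← intervalIntegral.integral_of_le (by linarith [Real.pi_pos])]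
  split_ifs with hn
  · simp only [hn, Int.cast_zero, mul_zero, exp_zero, intervalIntegral.integral_const,
      sub_neg_eq_add, real_smul, ofReal_add, mul_one]
    ring
  · have hc : I * n ≠ 0 := mul_ne_zero I_ne_zero (Int.cast_ne_zero.mpr hn)
    have hperiod : exp (I * n * π) = exp (I * n * (-π : ℝ)) :=
      exp_eq_exp_iff_exists_int.mpr ⟨n, by push_cast; ring⟩
    have hlin : (fun t : ℝ => exp (I * (t * n))) = fun t : ℝ => exp (I * n * t) := by
      ext t; ring_nf
    rw [hlin, integral_exp_mul_complex hc, hperiod, sub_self, zero_div]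

lemma integral_character (p : ℤ × ℤ) :
    ∫ w in Icc (-π) π ×ˢ Icc (-π) π, character p w = if p = 0 then 4 * (π : ℂ) ^ 2 else 0 := by
  have hsplit : ∀ w : ℝ × ℝ, character p w = exp (I * (w.1 * p.1)) * exp (I * (w.2 * p.2)) := by
    intro w; rw [character, ← Complex.exp_add, mul_add]
  simp_rw [hsplit]
  rw [Measure.volume_eq_prod, setIntegral_prod_mul (fun x : ℝ => exp (I * (x * p.1)))
    (fun y : ℝ => exp (I * (y * p.2))), integral_exp_I_mul_int, integral_exp_I_mul_int]
  obtain ⟨a, b⟩ := p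
  by_cases ha : a = 0 <;> by_cases hb : b = 0 <;> simp [ha, hb]
  ring

lemma dbarZ_character (w : ℝ × ℝ) (p : ℤ × ℤ) :
    dbarZ (fun p => character p w) p = dbarSymbol w / 2 * character p w := by
  have hshift : ∀ a b : ℤ, character (p.1 + a, p.2 + b) w =
      exp (I * (w.1 * a + w.2 * b)) * character p w := by
    intro a b
    simp only [character, ← Complex.exp_add]
    congr 1; push_cast; ring
  have h1 : character (p.1 + 1, p.2) w = exp (I * w.1) * character p w := by
    simpa using hshift 1 0
  have h2 : character (p.1 - 1, p.2) w = exp (-(I * w.1)) * character p w := by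
    simpa [sub_eq_add_neg] using hshift (-1) 0
  have h3 : character (p.1, p.2 + 1) w = exp (I * w.2) * character p w := by
    simpa using hshift 0 1
  have h4 : character (p.1, p.2 - 1) w = exp (-(I * w.2)) * character p w := by
    simpa [sub_eq_add_neg] using hshift 0 (-1)
  simp only [dbarZ, D1, D2, h1, h2, h3, h4, dbarSymbol, ofReal_sin, Complex.sin,
    mul_comm _ I, mul_neg]
  linear_combination (exp (I * w.1) - exp (-(I * w.1))) * character p w / 4 * I_sq

lemma dbarZ_const_mul (c : ℂ) (g : ℤ × ℤ → ℂ) (p : ℤ × ℤ) :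
    dbarZ (fun p => c * g p) p = c * dbarZ g p := by
  simp only [dbarZ, D1, D2]
  ring

lemma dbarZ_integral {α : Type*} [MeasurableSpace α] {μ : Measure α} {K : ℤ × ℤ → α → ℂ}
    (hK : ∀ p, Integrable (K p) μ) (p : ℤ × ℤ) :
    dbarZ (fun p => ∫ x, K p x ∂μ) p = ∫ x, dbarZ (fun p => K p x) p ∂μ := by
  have hD : ∀ a b, Integrable (fun x => (K a x - K b x) / 2) μ :=
    fun a b => ((hK a).sub (hK b)).div_const 2
  simp only [dbarZ, D1, D2]
  rw [← integral_sub (hK _) (hK _), ← integral_sub (hK _) (hK _), ← integral_div, ← integral_div,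
    ← integral_const_mul I, ← integral_add (hD _ _) ((hD _ _).const_mul I), ← integral_const_mul]

theorem dbarZ_Efun (p : ℤ × ℤ) : dbarZ Efun p = if p = 0 then 1 else 0 := by
  set c : ℂ := ((1 / (4 * π ^ 2) : ℝ) : ℂ)
  have hE : Efun = fun p => ∫ w in Icc (-π) π ×ˢ Icc (-π) π,
      c * (2 / dbarSymbol w * character p w) := by
    funext p
    rw [Efun_eq, ← integral_smul]
    simp_rw [Complex.real_smul]
    rfl
  have hsymbol : ∀ᵐ w ∂(volume.restrict (Icc (-π) π ×ˢ Icc (-π) π)),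
      c * (2 / dbarSymbol w * (dbarSymbol w / 2 * character p w)) = c * character p w := by
    filter_upwards [ae_restrict_of_ae ae_sin_fst_ne_zero_and_sin_snd_ne_zero] with w hw
    have hne : dbarSymbol w ≠ 0 := fun h =>
      hw.1 (by simpa [dbarSymbol, sin_ofReal_re] using congrArg im h)
    field_simp
  rw [hE, dbarZ_integral (fun p => (integrableOn_efun_integrand p).const_mul c)]
  simp_rw [dbarZ_const_mul, dbarZ_character]
  rw [integral_congr_ae hsymbol, integral_const_mul, integral_character]
  have hpi : (π : ℂ) ≠ 0 := ofReal_ne_zero.mpr Real.pi_ne_zero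
  split_ifs
  · simp only [c]; push_cast; field_simp
  · simp

lemma dbarZ_apply (g : ℤ × ℤ → ℂ) (p : ℤ × ℤ) :
    dbarZ g p = (g (p + (1, 0)) - g (p - (1, 0)) + I * (g (p + (0, 1)) - g (p - (0, 1)))) / 4 := by
  obtain ⟨a, b⟩ := p
  simp only [dbarZ, D1, D2, Prod.mk_add_mk, Prod.mk_sub_mk, add_zero, sub_zero]
  ring

lemma hasSum_dbarZ_mul {G : ℤ × ℤ → ℂ} (hG : G.HasFiniteSupport) (g : ℤ × ℤ → ℂ) :
    HasSum (fun p => dbarZ G p * g p) (-∑' p, G p * dbarZ g p) := by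
  set T : ℤ × ℤ → ℂ := fun c => ∑' p, G p * g (p + c)
  have hright : ∀ c, HasSum (fun p => G p * g (p + c)) (T c) := fun c =>
    (summable_of_hasFiniteSupport (hG.mul_left fun p => g (p + c))).hasSum
  have hleft : ∀ c, HasSum (fun p => G (p - c) * g p) (T c) := fun c => by
    simpa [comp_def] using (Equiv.subRight c).hasSum_iff.mpr (hright c)
  have hdbar : HasSum (fun p => G p * dbarZ g p)
      ((T (1, 0) - T (-(1, 0)) + I * (T (0, 1) - T (-(0, 1)))) / 4) := by
    refine ((((hright (1, 0)).sub (hright (-(1, 0)))).add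
      (((hright (0, 1)).sub (hright (-(0, 1)))).mul_left I)).div_const 4).congr_fun fun p => ?_
    simp only [dbarZ_apply, sub_eq_add_neg]
    ring
  rw [hdbar.tsum_eq, show -((T (1, 0) - T (-(1, 0)) + I * (T (0, 1) - T (-(0, 1)))) / 4) =
    (T (-(1, 0)) - T (1, 0) + I * (T (-(0, 1)) - T (0, 1))) / 4 by ring]
  refine ((((hleft (-(1, 0))).sub (hleft (1, 0))).add
    (((hleft (-(0, 1))).sub (hleft (0, 1))).mul_left I)).div_const 4).congr_fun fun p => ?_
  simp only [dbarZ_apply, sub_neg_eq_add]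
  ring

def boundaryTerm (E χ g : ℤ × ℤ → ℂ) (q p : ℤ × ℤ) : ℂ :=
  (E (q - p + (1, 0)) * (χ p - χ (p - (1, 0))) + E (q - p - (1, 0)) * (χ (p + (1, 0)) - χ p) +
    I * E (q - p + (0, 1)) * (χ p - χ (p - (0, 1))) +
    I * E (q - p - (0, 1)) * (χ (p + (0, 1)) - χ p)) / 4 * g p

lemma boundaryTerm_eq (E χ g : ℤ × ℤ → ℂ) (q p : ℤ × ℤ) :
    boundaryTerm E χ g q p = (χ p * dbarZ E (q - p) + dbarZ (fun r => χ r * E (q - r)) p) * g p := by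
  have hsub : ∀ c, q - (p - c) = q - p + c := fun c => by abel
  have hadd : ∀ c, q - (p + c) = q - p - c := fun c => by abel
  simp only [boundaryTerm, dbarZ_apply, hsub, hadd]
  ring

theorem tsum_boundaryTerm_add_tsum_mul_dbarZ {E χ : ℤ × ℤ → ℂ}
    (hE : ∀ p, dbarZ E p = if p = 0 then 1 else 0) (hχ : χ.HasFiniteSupport)
    (g : ℤ × ℤ → ℂ) (q : ℤ × ℤ) :
    ∑' p, boundaryTerm E χ g q p + ∑' p, χ p * (E (q - p) * dbarZ g p) = χ q * g q := by
  have hG : (fun r => χ r * E (q - r)).HasFiniteSupport := hχ.mul_left _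
  have hdelta : ∀ p, χ p * dbarZ E (q - p) * g p = if p = q then χ q * g q else 0 := by
    intro p
    rw [hE]
    by_cases h : p = q
    · simp [h]
    · simp [h, sub_eq_zero, Ne.symm h]
  have hbdry : HasSum (boundaryTerm E χ g q) (χ q * g q + -∑' p, χ p * E (q - p) * dbarZ g p) :=
    ((hasSum_ite_eq q (χ q * g q)).add (hasSum_dbarZ_mul hG g)).congr_fun fun p => by
      rw [boundaryTerm_eq, add_mul, hdelta, eq_comm]
  simp only [hbdry.tsum_eq, mul_assoc]
  ring

def latticeEmb (h : ℝ) : ℤ × ℤ →+ ℂ :=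
  AddMonoidHom.mk' (fun p => h * (p.1 + p.2 * I)) fun a b => by
    simp only [Prod.fst_add, Prod.snd_add]
    push_cast
    ring

section Lattice

variable {h : ℝ}

lemma latticeEmb_apply (p : ℤ × ℤ) : latticeEmb h p = h * (p.1 + p.2 * I) := rfl

@[simp] lemma latticeEmb_re (p : ℤ × ℤ) : (latticeEmb h p).re = h * p.1 := by
  simp [latticeEmb_apply]

@[simp] lemma latticeEmb_im (p : ℤ × ℤ) : (latticeEmb h p).im = h * p.2 := by
  simp [latticeEmb_apply]

lemma latticeEmb_one_zero : latticeEmb h (1, 0) = h := by simp [latticeEmb_apply]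

lemma latticeEmb_zero_one : latticeEmb h (0, 1) = h * I := by simp [latticeEmb_apply]

lemma latt_eq_range (h : ℝ) : latt h = range (latticeEmb h) := by
  ext z
  simp only [latt, mem_ofPred_eq, mem_range, Prod.exists, latticeEmb_apply, eq_comm]

lemma latticeEmb_injective (hh : h ≠ 0) : Injective (latticeEmb h) := by
  intro p r hpr
  have h1 := congrArg re hpr
  have h2 := congrArg im hpr
  simp only [latticeEmb_re, latticeEmb_im, mul_right_inj' hh, Int.cast_inj] at h1 h2
  exact Prod.ext h1 h2

lemma Eh_latticeEmb (hh : h ≠ 0) (p : ℤ × ℤ) : Eh h (latticeEmb h p) = Efun p / h := by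
  simp [Eh, mul_div_cancel_left₀ _ hh, div_eq_inv_mul]

lemma finite_preimage_latticeEmb (hh : h ≠ 0) {B : Set ℂ} (hB : Bornology.IsBounded B) :
    (latticeEmb h ⁻¹' B).Finite := by
  have hanti : AntilipschitzWith ‖h‖₊⁻¹ (latticeEmb h) := by
    refine AddMonoidHomClass.antilipschitz_of_bound _ fun p => ?_
    have hpos : 0 < |h| := abs_pos.mpr hh
    rw [Prod.norm_def, Int.norm_eq_abs, Int.norm_eq_abs, NNReal.coe_inv, coe_nnnorm,
      Real.norm_eq_abs, ← div_eq_inv_mul, max_le_iff, le_div_iff₀ hpos, le_div_iff₀ hpos]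
    constructor
    · simpa [abs_mul, mul_comm] using abs_re_le_norm (latticeEmb h p)
    · simpa [abs_mul, mul_comm] using abs_im_le_norm (latticeEmb h p)
  simpa using Metric.finite_isBounded_inter_isClosed DiscreteTopology.isDiscrete
    (hanti.isBounded_preimage hB) isClosed_univ

lemma tsum_subtype_eq_tsum_latticeEmb (hh : h ≠ 0) {s : Set ℂ} (hs : s ⊆ latt h) (F : ℂ → ℂ) :
    ∑' z : s, F z = ∑' p, s.indicator F (latticeEmb h p) := by
  rw [tsum_subtype, (latticeEmb_injective hh).tsum_eq
    (support_indicator_subset.trans (latt_eq_range h ▸ hs))]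

lemma dbarC_latticeEmb (f : ℂ → ℂ) (p : ℤ × ℤ) :
    dbarC h f (latticeEmb h p) = dbarZ (f ∘ latticeEmb h) p / h := by
  simp only [dbarC, cdp1, cdm1, cdp2, cdm2, dbarZ_apply, comp_apply, map_add, map_sub,
    latticeEmb_one_zero, latticeEmb_zero_one]
  field_simp
  ring

def latticeChi (h : ℝ) (B : Set ℂ) (p : ℤ × ℤ) : ℂ := chi B (latticeEmb h p)

lemma indicator_eq_chi_mul (B : Set ℂ) (f : ℂ → ℂ) (z : ℂ) : B.indicator f z = chi B z * f z := by
  by_cases hz : z ∈ B <;> simp [chi, hz]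

lemma hasFiniteSupport_latticeChi (hh : h ≠ 0) {B : Set ℂ} (hB : Bornology.IsBounded B) :
    (latticeChi h B).HasFiniteSupport := by
  refine (finite_preimage_latticeEmb hh hB).subset fun p hp => ?_
  simpa [latticeChi, chi] using hp

end Lattice

section Boundary

variable {h : ℝ} {B : Set ℂ}

lemma sden_eq_zero_of_notMem_dBdry {z : ℂ} (hz : z ∈ latt h) (hnd : z ∉ dBdry h B) :
    sden h B z = 0 := by
  have hconst : ∀ w ∈ nbhd h z, chi B w = chi B z := by
    have hz' : z ∈ nbhd h z := by simp [nbhd]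
    simp only [dBdry, mem_sep_iff, hz, true_and, not_and_or, not_nonempty_iff_eq_empty,
      sdiff_eq_empty, ← disjoint_iff_inter_eq_empty, disjoint_left] at hnd
    rcases hnd with hout | hin
    · intro w hw
      simp [chi, hout hw, hout hz']
    · intro w hw
      simp [chi, hin hw, hin hz']
  simp [sden, Qsum, dp1, dm1, dp2, dm2, hconst (z + h) (by simp [nbhd]),
    hconst (z - h) (by simp [nbhd]), hconst (z + h * I) (by simp [nbhd]),
    hconst (z - h * I) (by simp [nbhd])]

lemma normal_mul_sden {z : ℂ} {d : ℝ} (hd : d ^ 2 ≤ Qsum h B z) :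
    -2 * d / √(Qsum h B z) * sden h B z = -h ^ 2 * d := by
  rw [sden]
  rcases eq_or_ne (√(Qsum h B z)) 0 with hQ | hQ
  · have : d = 0 := by
      rw [Real.sqrt_eq_zero'] at hQ
      nlinarith [sq_nonneg d]
    simp [this]
  · field_simp

lemma sq_le_Qsum (z : ℂ) :
    dp1 h (chi B) z ^ 2 ≤ Qsum h B z ∧ dm1 h (chi B) z ^ 2 ≤ Qsum h B z ∧
      dp2 h (chi B) z ^ 2 ≤ Qsum h B z ∧ dm2 h (chi B) z ^ 2 ≤ Qsum h B z := by
  have := sq_nonneg (dp1 h (chi B) z)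
  have := sq_nonneg (dm1 h (chi B) z)
  have := sq_nonneg (dp2 h (chi B) z)
  have := sq_nonneg (dm2 h (chi B) z)
  unfold Qsum
  refine ⟨?_, ?_, ?_, ?_⟩ <;> linarith

lemma Kker_mul_sden (z ζ : ℂ) :
    Kker h B z ζ * sden h B z = h ^ 2 / 4 *
      (Eh h (h - (z - ζ)) * dm1 h (chi B) z + Eh h (-h - (z - ζ)) * dp1 h (chi B) z +
        I * Eh h (h * I - (z - ζ)) * dm2 h (chi B) z +
        I * Eh h (-(h * I) - (z - ζ)) * dp2 h (chi B) z) := by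
  have key : ∀ d : ℝ, d ^ 2 ≤ Qsum h B z →
      ((-2 * d / √(Qsum h B z) : ℝ) : ℂ) * sden h B z = -h ^ 2 * d := fun d hd => by
    exact_mod_cast normal_mul_sden hd
  obtain ⟨hp1, hm1, hp2, hm2⟩ := sq_le_Qsum (h := h) (B := B) z
  have k1 := key _ hm1
  have k2 := key _ hp1
  have k3 := key _ hm2
  have k4 := key _ hp2
  rw [Kker, n1m, n1p, n2m, n2p]
  linear_combination -Eh h (h - (z - ζ)) / 4 * k1 - Eh h (-h - (z - ζ)) / 4 * k2 -
    I * Eh h (h * I - (z - ζ)) / 4 * k3 - I * Eh h (-(h * I) - (z - ζ)) / 4 * k4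

lemma Kker_mul_sden_latticeEmb (hh : h ≠ 0) (f : ℂ → ℂ) (q p : ℤ × ℤ) :
    Kker h B (latticeEmb h p) (latticeEmb h q) * f (latticeEmb h p) * sden h B (latticeEmb h p) =
      boundaryTerm Efun (latticeChi h B) (f ∘ latticeEmb h) q p := by
  have hshift : ∀ c, latticeEmb h c - (latticeEmb h p - latticeEmb h q) =
      latticeEmb h (q - p + c) := fun c => by rw [map_add, map_sub]; ring
  have a1 := hshift (1, 0)
  have a2 := hshift (-(1, 0))
  have a3 := hshift (0, 1)
  have a4 := hshift (-(0, 1))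
  simp only [map_neg, latticeEmb_one_zero, latticeEmb_zero_one, ← sub_eq_add_neg] at a1 a2 a3 a4
  rw [mul_right_comm, Kker_mul_sden, a1, a2, a3, a4, Eh_latticeEmb hh, Eh_latticeEmb hh,
    Eh_latticeEmb hh, Eh_latticeEmb hh]
  have hh' : (h : ℂ) ≠ 0 := ofReal_ne_zero.mpr hh
  simp only [boundaryTerm, latticeChi, dm1, dp1, dm2, dp2, comp_apply, map_add, map_sub,
    latticeEmb_one_zero, latticeEmb_zero_one]
  push_cast
  field_simp

lemma tsum_dBdry_eq_tsum_boundaryTerm (hh : h ≠ 0) (f : ℂ → ℂ) (q : ℤ × ℤ) :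
    ∑' z : dBdry h B, Kker h B z (latticeEmb h q) * f z * (sden h B z : ℂ) =
      ∑' p, boundaryTerm Efun (latticeChi h B) (f ∘ latticeEmb h) q p := by
  refine (tsum_subtype_eq_tsum_latticeEmb hh (fun z (hz : z ∈ dBdry h B) => hz.1)
    fun z => Kker h B z (latticeEmb h q) * f z * (sden h B z : ℂ)).trans (tsum_congr fun p => ?_)
  rw [← Kker_mul_sden_latticeEmb hh]
  by_cases hp : latticeEmb h p ∈ dBdry h B
  · rw [indicator_of_mem hp]
  · rw [indicator_of_notMem hp,
      sden_eq_zero_of_notMem_dBdry (latt_eq_range h ▸ mem_range_self p) hp]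
    simp

lemma tsum_subtype_eq_tsum_latticeChi (hh : h ≠ 0) (hB : B ⊆ latt h) (f : ℂ → ℂ) (q : ℤ × ℤ) :
    ∑' z : B, Eh h (latticeEmb h q - z) * dbarC h f z * (h : ℂ) ^ 2 =
      ∑' p, latticeChi h B p * (Efun (q - p) * dbarZ (f ∘ latticeEmb h) p) := by
  have hh' : (h : ℂ) ≠ 0 := ofReal_ne_zero.mpr hh
  refine (tsum_subtype_eq_tsum_latticeEmb hh hB
    fun z => Eh h (latticeEmb h q - z) * dbarC h f z * (h : ℂ) ^ 2).trans (tsum_congr fun p => ?_)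
  rw [indicator_eq_chi_mul, ← map_sub, Eh_latticeEmb hh, dbarC_latticeEmb, latticeChi]
  field_simp

end Boundary

end DiscreteCauchyPompeiu

open DiscreteCauchyPompeiu in
/-- Discrete Cauchy-Pompeiu formula:
`χ_B(ζ) f(ζ) = ∫_{∂B} K^h(z,ζ) f(z) dS(z) + ∫_B E^h(ζ-z) ∂_z̄^h f(z) dV^h(z)`. -/
theorem stmt11 (h : ℝ) (hh : 0 < h) (B : Set ℂ) (hB : B ⊆ latt h)
    (hbd : Bornology.IsBounded B) (f : ℂ → ℂ) (ζ : ℂ) (hζ : ζ ∈ latt h) :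
    B.indicator f ζ =
      (∑' z : (dBdry h B), Kker h B z ζ * f z * (sden h B z : ℂ)) +
      ∑' z : B, Eh h (ζ - z) * dbarC h f z * (h : ℂ) ^ 2 := by
  rw [latt_eq_range] at hζ
  obtain ⟨q, rfl⟩ := hζ
  rw [indicator_eq_chi_mul, tsum_dBdry_eq_tsum_boundaryTerm hh.ne',
    tsum_subtype_eq_tsum_latticeChi hh.ne' hB]
  exact (tsum_boundaryTerm_add_tsum_mul_dbarZ dbarZ_Efun
    (hasFiniteSupport_latticeChi hh.ne' hbd) (f ∘ latticeEmb h) q).symm
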